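/- arXiv:2205.09631 — 2 statements merged into one kernel-verified Lean document; each statement's English description precedes it below -/
import Mathlib

section
/- Let σ ∈ S^m_{ρ,δ,N,N'} with 0 < ρ ≤ 1, 0 ≤ δ < 1, let α, β be multi-indices with |α| ≤ N, and set a = d+m+δ|α|+|β|. For every L ≥ 0 with a + L > 0 there is a constant C_{α,β,L} such that for all x ∈ ℝ^d and all z with 0 < |z| ≤ 1: Σ over those j ≥ 0 with 2^j ≤ |z|^{−1} of |K_{j,α,β}(x,z)| is at most C_{α,β,L} · |z|^{−a−L}. -/
open MeasureTheory Real Complex Filter Set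

noncomputable section

/-- `ℝ^d` with the Euclidean norm. -/
abbrev Ed (d : ℕ) := EuclideanSpace ℝ (Fin d)

namespace PaperPDO

/-- The length `|α| = α₁ + ⋯ + α_d` of a multi-index. -/
def msize {d : ℕ} (α : Fin d → ℕ) : ℕ := ∑ i, α i

/-- The Japanese bracket `⟨ξ⟩ = (1 + |ξ|²)^{1/2}`. -/
def jb {d : ℕ} (ξ : Ed d) : ℝ := Real.sqrt (1 + ‖ξ‖ ^ 2)

/-- The max norm `|x|_∞` on `ℝ^d`. -/
def maxNorm {d : ℕ} (x : Ed d) : ℝ := ‖(fun i => x i : Fin d → ℝ)‖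

/-- The ℓ¹-norm `|x|₁` on `ℝ^d`. -/
def l1Norm {d : ℕ} (x : Ed d) : ℝ := ∑ i, |x i|

/-- The monomial `x^α = x₁^{α₁} ⋯ x_d^{α_d}` (as a complex number). -/
def monom {d : ℕ} (α : Fin d → ℕ) (x : Ed d) : ℂ := ∏ i, (x i : ℂ) ^ (α i)

/-- First-order partial derivative `∂_i f` via the Fréchet derivative. -/
def pd {d : ℕ} (i : Fin d) (f : Ed d → ℂ) : Ed d → ℂ :=
  fun x => fderiv ℝ f x (EuclideanSpace.single i (1 : ℝ))

/-- `n`-fold partial derivative `∂_i^n f`. -/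
def pdPow {d : ℕ} (i : Fin d) : ℕ → (Ed d → ℂ) → (Ed d → ℂ)
  | 0, f => f
  | n + 1, f => pd i (pdPow i n f)

/-- Iterated partial derivative `∂^γ f` along a multi-index `γ`. -/
def mpd {d : ℕ} (γ : Fin d → ℕ) (f : Ed d → ℂ) : Ed d → ℂ :=
  (List.finRange d).foldr (fun i g => pdPow i (γ i) g) f

/-- The nonsmooth Hörmander symbol class `S^m_{ρ,δ,N,N'}`:  all partial derivatives
`D α β = ∂_x^α ∂_ξ^β σ` with `|α| ≤ N`, `|β| ≤ N'` exist, are continuous, and satisfy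
`|∂_x^α ∂_ξ^β σ(x,ξ)| ≤ C_{α,β} ⟨ξ⟩^{m - ρ|β| + δ|α|}`. -/
structure SymbolClass (d : ℕ) (m ρ δ : ℝ) (N N' : ℕ) (σ : Ed d → Ed d → ℂ) where
  /-- the family of partial derivatives `∂_x^α ∂_ξ^β σ` -/
  D : (Fin d → ℕ) → (Fin d → ℕ) → Ed d → Ed d → ℂ
  D_zero : D 0 0 = σ
  hasDeriv_x : ∀ (α β : Fin d → ℕ) (i : Fin d), msize α < N → msize β ≤ N' →
    ∀ (x ξ : Ed d),
      HasDerivAt (fun t : ℝ => D α β (x + t • EuclideanSpace.single i (1 : ℝ)) ξ)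
        (D (α + Pi.single i 1) β x ξ) 0
  hasDeriv_ξ : ∀ (α β : Fin d → ℕ) (i : Fin d), msize α ≤ N → msize β < N' →
    ∀ (x ξ : Ed d),
      HasDerivAt (fun t : ℝ => D α β x (ξ + t • EuclideanSpace.single i (1 : ℝ)))
        (D α (β + Pi.single i 1) x ξ) 0
  continuous : ∀ (α β : Fin d → ℕ), msize α ≤ N → msize β ≤ N' →
    Continuous (fun p : Ed d × Ed d => D α β p.1 p.2)
  bound : ∀ (α β : Fin d → ℕ), msize α ≤ N → msize β ≤ N' →
    ∃ C : ℝ, ∀ (x ξ : Ed d),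
      ‖D α β x ξ‖ ≤ C * jb ξ ^ (m - ρ * (msize β : ℝ) + δ * (msize α : ℝ))

/-- A bump function `η` suitable for the dyadic decomposition:  `η ∈ C_c^∞(ℝ^d)`,
`0 ≤ η ≤ 1`, `η = 1` on `|ξ| ≤ 1` and `η = 0` on `|ξ| ≥ 2`. -/
structure IsDyadicCutoff (d : ℕ) (η : Ed d → ℝ) : Prop where
  smooth : ContDiff ℝ (⊤ : ℕ∞) η
  compactSupport : HasCompactSupport η
  nonneg : ∀ ξ, 0 ≤ η ξ
  le_one : ∀ ξ, η ξ ≤ 1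
  eq_one : ∀ ξ : Ed d, ‖ξ‖ ≤ 1 → η ξ = 1
  eq_zero : ∀ ξ : Ed d, 2 ≤ ‖ξ‖ → η ξ = 0

/-- The dyadic cutoffs: `cutoff η 0 ξ = η(ξ)` and, for `j ≥ 1`,
`cutoff η j ξ = ζ(2^{-j} ξ)` where `ζ(ξ) = η(ξ) - η(2ξ)`. -/
def cutoff {d : ℕ} (η : Ed d → ℝ) (j : ℕ) (ξ : Ed d) : ℝ :=
  if j = 0 then η ξ
  else η (((2 : ℝ) ^ (-(j : ℤ))) • ξ) - η (((2 : ℝ) ^ (-(j : ℤ) + 1)) • ξ)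

/-- `K_{j,α,β}(x,z) = (2π)^{-d} ∫ (iξ)^β ∂_x^α σ_j(x,ξ) e^{iξ·z} dξ`, where
`σ_j(x,ξ) = σ(x,ξ) · cutoff η j ξ` and `D α 0 = ∂_x^α σ`. -/
def Kj {d : ℕ} (D : (Fin d → ℕ) → (Fin d → ℕ) → Ed d → Ed d → ℂ) (η : Ed d → ℝ)
    (j : ℕ) (α β : Fin d → ℕ) (x z : Ed d) : ℂ :=
  ((2 * Real.pi) ^ (-(d : ℤ))) •
    ∫ ξ : Ed d, (∏ i, (Complex.I * (ξ i : ℂ)) ^ (β i)) * D α 0 x ξ *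
      (cutoff η j ξ : ℂ) * Complex.exp (Complex.I * ((inner ℝ ξ z : ℝ) : ℂ))

/-- The Fourier transform `f̂(ξ) = ∫ e^{-i y·ξ} f(y) dy` (paper's convention). -/
def FT {d : ℕ} (f : Ed d → ℂ) (ξ : Ed d) : ℂ :=
  ∫ y : Ed d, Complex.exp (-(Complex.I) * ((inner ℝ y ξ : ℝ) : ℂ)) * f y

end PaperPDO

open PaperPDO
variable {d : ℕ}

lemma PaperPDO.one_le_jb (ξ : Ed d) : 1 ≤ jb ξ := by
  rw [jb]
  exact (Real.le_sqrt' one_pos).mpr (by nlinarith [sq_nonneg ‖ξ‖])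

lemma PaperPDO.jb_pos (ξ : Ed d) : 0 < jb ξ := lt_of_lt_of_le one_pos (one_le_jb ξ)

lemma PaperPDO.norm_le_jb (ξ : Ed d) : ‖ξ‖ ≤ jb ξ := by
  rw [jb]
  rcases eq_or_lt_of_le (norm_nonneg ξ) with h | h
  · rw [← h]; positivity
  · exact (Real.le_sqrt' h).mpr (by nlinarith)

lemma PaperPDO.jb_le (ξ : Ed d) : jb ξ ≤ 1 + ‖ξ‖ := by
  rw [jb, show (1:ℝ) + ‖ξ‖ = Real.sqrt ((1 + ‖ξ‖)^2) by
    rw [Real.sqrt_sq (by positivity)]]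
  exact Real.sqrt_le_sqrt (by nlinarith [norm_nonneg ξ])

lemma PaperPDO.abs_cutoff_le_one {η : Ed d → ℝ} (hη : IsDyadicCutoff d η) (j : ℕ) (ξ : Ed d) :
    |cutoff η j ξ| ≤ 1 := by
  rcases eq_or_ne j 0 with h | h
  · simp only [cutoff, h, if_true]
    rw [abs_le]; constructor
    · linarith [hη.nonneg ξ]
    · exact hη.le_one ξ
  · simp only [cutoff, h, if_false]
    rw [abs_le]
    constructor <;>
      linarith [hη.nonneg (((2:ℝ)^(-(j:ℤ))) • ξ), hη.le_one (((2:ℝ)^(-(j:ℤ))) • ξ),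
        hη.nonneg (((2:ℝ)^(-(j:ℤ)+1)) • ξ), hη.le_one (((2:ℝ)^(-(j:ℤ)+1)) • ξ)]

lemma PaperPDO.cutoff_eq_zero_of_big {η : Ed d → ℝ} (hη : IsDyadicCutoff d η) (j : ℕ)
    (ξ : Ed d) (h : (2:ℝ)^(j+1) ≤ ‖ξ‖) : cutoff η j ξ = 0 := by
  rcases eq_or_ne j 0 with hj | hj
  · simp only [cutoff, hj, if_true]
    apply hη.eq_zero
    simpa [hj] using h
  · simp only [cutoff, hj, if_false]
    have hn1 : ‖((2:ℝ)^(-(j:ℤ))) • ξ‖ = (2:ℝ)^(-(j:ℤ)) * ‖ξ‖ := by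
      rw [norm_smul, Real.norm_eq_abs, abs_of_pos (by positivity)]
    have hn2 : ‖((2:ℝ)^(-(j:ℤ)+1)) • ξ‖ = (2:ℝ)^(-(j:ℤ)+1) * ‖ξ‖ := by
      rw [norm_smul, Real.norm_eq_abs, abs_of_pos (by positivity)]
    have h1 : (2:ℝ) ≤ (2:ℝ)^(-(j:ℤ)) * ‖ξ‖ := by
      have := mul_le_mul_of_nonneg_left h (by positivity : (0:ℝ) ≤ (2:ℝ)^(-(j:ℤ)))
      calc (2:ℝ) = (2:ℝ)^(-(j:ℤ)) * (2:ℝ)^(j+1) := by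
            rw [← zpow_natCast (2:ℝ) (j+1), ← zpow_add₀ (by norm_num : (2:ℝ) ≠ 0)]
            rw [show -(j:ℤ) + ((j+1 : ℕ):ℤ) = 1 by push_cast; ring]
            norm_num
        _ ≤ _ := this
    have h2 : (2:ℝ) ≤ (2:ℝ)^(-(j:ℤ)+1) * ‖ξ‖ := by
      have := mul_le_mul_of_nonneg_left h (by positivity : (0:ℝ) ≤ (2:ℝ)^(-(j:ℤ)+1))
      calc (2:ℝ) ≤ (2:ℝ)^(-(j:ℤ)+1) * (2:ℝ)^(j+1) := by
            rw [← zpow_natCast (2:ℝ) (j+1), ← zpow_add₀ (by norm_num : (2:ℝ) ≠ 0)]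
            rw [show -(j:ℤ) + 1 + ((j+1 : ℕ):ℤ) = 2 by push_cast; ring]
            norm_num
        _ ≤ _ := this
    rw [hη.eq_zero _ (hn1 ▸ h1), hη.eq_zero _ (hn2 ▸ h2), sub_zero]

lemma PaperPDO.cutoff_eq_zero_of_small {η : Ed d → ℝ} (hη : IsDyadicCutoff d η) (j : ℕ)
    (hj : j ≠ 0) (ξ : Ed d) (h : 2 * ‖ξ‖ ≤ (2:ℝ)^j) : cutoff η j ξ = 0 := by
  simp only [cutoff, hj, if_false]
  have hn1 : ‖((2:ℝ)^(-(j:ℤ))) • ξ‖ = (2:ℝ)^(-(j:ℤ)) * ‖ξ‖ := by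
    rw [norm_smul, Real.norm_eq_abs, abs_of_pos (by positivity)]
  have hn2 : ‖((2:ℝ)^(-(j:ℤ)+1)) • ξ‖ = (2:ℝ)^(-(j:ℤ)+1) * ‖ξ‖ := by
    rw [norm_smul, Real.norm_eq_abs, abs_of_pos (by positivity)]
  have key : (2:ℝ)^(-(j:ℤ)) * (2:ℝ)^(j:ℤ) = 1 := by
    rw [← zpow_add₀ (by norm_num : (2:ℝ) ≠ 0)]; norm_num
  have h1 : (2:ℝ)^(-(j:ℤ)) * ‖ξ‖ ≤ 1 := by
    have := mul_le_mul_of_nonneg_left h (by positivity : (0:ℝ) ≤ (2:ℝ)^(-(j:ℤ)))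
    rw [← mul_assoc] at this
    have h2' : (2:ℝ)^(-(j:ℤ)) * (2:ℝ)^j = 1 := by
      rw [← zpow_natCast (2:ℝ) j, key]
    nlinarith [norm_nonneg ξ, (by positivity : (0:ℝ) < (2:ℝ)^(-(j:ℤ)))]
  have h2 : (2:ℝ)^(-(j:ℤ)+1) * ‖ξ‖ ≤ 1 := by
    have e : (2:ℝ)^(-(j:ℤ)+1) = 2 * (2:ℝ)^(-(j:ℤ)) := by
      rw [zpow_add₀ (by norm_num : (2:ℝ) ≠ 0)]; ring
    have h2' : (2:ℝ)^(-(j:ℤ)) * (2:ℝ)^j = 1 := by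
      rw [← zpow_natCast (2:ℝ) j, key]
    rw [e]
    nlinarith [norm_nonneg ξ, (by positivity : (0:ℝ) < (2:ℝ)^(-(j:ℤ)))]
  rw [hη.eq_one _ (hn1 ▸ h1), hη.eq_one _ (hn2 ▸ h2), sub_self]


open PaperPDO Metric in
lemma PaperPDO.Kj_norm_bound {d : ℕ} {m ρ δ : ℝ} {N N' : ℕ} {σ : Ed d → Ed d → ℂ}
    (hσ : SymbolClass d m ρ δ N N' σ) {η : Ed d → ℝ} (hη : IsDyadicCutoff d η)
    (α β : Fin d → ℕ) (hα : msize α ≤ N) :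
    ∃ C : ℝ, 0 ≤ C ∧ ∀ (j : ℕ) (x z : Ed d),
      ‖Kj hσ.D η j α β x z‖ ≤
        C * (2:ℝ) ^ ((j:ℝ) * ((d:ℝ) + m + δ * (msize α : ℝ) + (msize β : ℝ))) := by
  set e : ℝ := m + δ * (msize α : ℝ) with he
  obtain ⟨C0, hC0⟩ := hσ.bound α 0 hα (by simp [msize])
  have hC0' : ∀ x ξ, ‖hσ.D α 0 x ξ‖ ≤ max C0 0 * jb ξ ^ e := by
    intro x ξ
    have h := hC0 x ξ
    have hee : m - ρ * ((msize (0 : Fin d → ℕ)):ℝ) + δ * (msize α : ℝ) = e := by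
      simp [msize, he]
    rw [hee] at h
    exact h.trans (mul_le_mul_of_nonneg_right (le_max_left _ _)
      (Real.rpow_nonneg (jb_pos ξ).le _))
  set vol1 : ℝ := (volume (ball (0:Ed d) 1)).toReal with hvol1
  have hvol1nn : 0 ≤ vol1 := ENNReal.toReal_nonneg
  refine ⟨max C0 0 * (4:ℝ)^|e| * 2^(msize β + d) * vol1, by positivity, ?_⟩
  intro j x z
  set t : ℝ := (2:ℝ)^j with ht
  have ht0 : (0:ℝ) < t := by positivity
  have ht1 : (1:ℝ) ≤ t := one_le_pow₀ (by norm_num)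
  set R : ℝ := (2:ℝ)^(j+1) with hRdef
  have hR : R = 2 * t := by rw [hRdef, ht, pow_succ]; ring
  have hR0 : (0:ℝ) ≤ R := by positivity
  set f : Ed d → ℂ := fun ξ => (∏ i, (Complex.I * (ξ i : ℂ)) ^ (β i)) * hσ.D α 0 x ξ *
      ((cutoff η j ξ : ℝ) : ℂ) * Complex.exp (Complex.I * ((inner ℝ ξ z : ℝ) : ℂ)) with hf
  set M : ℝ := R^(msize β) * (max C0 0 * ((4:ℝ)^|e| * t ^ e)) with hMdef
  have hM0 : 0 ≤ M := by positivity
  have hzero : ∀ ξ ∉ closedBall (0:Ed d) R, f ξ = 0 := by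
    intro ξ hξ
    rw [mem_closedBall, dist_zero_right, not_le] at hξ
    rw [hf]
    simp only
    rw [cutoff_eq_zero_of_big hη j ξ hξ.le]
    push_cast
    ring
  -- pointwise bound
  have hM : ∀ ξ ∈ closedBall (0:Ed d) R, ‖f ξ‖ ≤ M := by
    intro ξ hξ
    rw [mem_closedBall, dist_zero_right] at hξ
    by_cases hcut : cutoff η j ξ = 0
    · rw [hf]; simp only
      rw [hcut]
      push_cast
      simp only [mul_zero, zero_mul, norm_zero]
      exact hM0
    · have hnorm : ‖f ξ‖ = ‖∏ i, (Complex.I * (ξ i:ℂ))^(β i)‖ * ‖hσ.D α 0 x ξ‖ *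
          |cutoff η j ξ| * 1 := by
        rw [hf]
        simp only [norm_mul]
        congr 2
        · exact Complex.norm_real _
        · rw [Complex.norm_exp]
          simp
      have h1 : ‖∏ i, (Complex.I * (ξ i:ℂ))^(β i)‖ ≤ R ^ msize β := by
        rw [norm_prod]
        have hib : ∀ i : Fin d, ‖(Complex.I * (ξ i:ℂ))^(β i)‖ ≤ R ^ (β i) := by
          intro i
          rw [norm_pow, norm_mul, Complex.norm_I, one_mul, Complex.norm_real,
            Real.norm_eq_abs]
          have hcoord : |ξ i| ≤ R := by
            calc |ξ i| = Real.sqrt (‖ξ i‖^2) := by rw [Real.sqrt_sq_eq_abs]; simp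
              _ ≤ Real.sqrt (∑ k, ‖ξ k‖^2) := Real.sqrt_le_sqrt
                  (Finset.single_le_sum (fun k _ => sq_nonneg ‖ξ k‖) (Finset.mem_univ i))
              _ = ‖ξ‖ := (EuclideanSpace.norm_eq ξ).symm
              _ ≤ R := hξ
          exact pow_le_pow_left₀ (abs_nonneg _) hcoord _
        calc ∏ i, ‖(Complex.I * (ξ i:ℂ))^(β i)‖ ≤ ∏ i, R ^ (β i) :=
              Finset.prod_le_prod (fun i _ => norm_nonneg _) (fun i _ => hib i)
          _ = R ^ msize β := by rw [msize, ← Finset.prod_pow_eq_pow_sum]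
      have hjbU : jb ξ ≤ 4 * t := by
        have h3 := jb_le ξ
        have h2 : ‖ξ‖ ≤ R := hξ
        rw [hR] at h2
        linarith
      have hjbL : t ≤ 2 * jb ξ := by
        rcases eq_or_ne j 0 with hj | hj
        · rw [ht, hj]
          have := one_le_jb ξ
          simp only [pow_zero]
          linarith
        · by_contra hcon
          push_neg at hcon
          have hss : 2 * ‖ξ‖ ≤ (2:ℝ)^j := by
            have := norm_le_jb ξ
            rw [← ht]
            linarith
          exact hcut (cutoff_eq_zero_of_small hη j hj ξ hss)
      have hjbe : jb ξ ^ e ≤ (4:ℝ)^|e| * t ^ e := by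
        rcases le_or_gt 0 e with hep | hen
        · calc jb ξ ^ e ≤ (4*t) ^ e := Real.rpow_le_rpow (jb_pos ξ).le hjbU hep
            _ = (4:ℝ)^e * t^e := Real.mul_rpow (by norm_num) ht0.le
            _ ≤ (4:ℝ)^|e| * t^e := by
                have h4 : (4:ℝ)^e ≤ (4:ℝ)^|e| :=
                  (Real.rpow_le_rpow_left_iff (by norm_num : (1:ℝ) < 4)).mpr (le_abs_self e)
                exact mul_le_mul_of_nonneg_right h4 (Real.rpow_nonneg ht0.le _)
        · have htle : t/2 ≤ jb ξ := by linarith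
          calc jb ξ ^ e ≤ (t/2) ^ e :=
                Real.rpow_le_rpow_of_nonpos (by positivity) htle hen.le
            _ = t^e / (2:ℝ)^e := Real.div_rpow ht0.le (by norm_num : (0:ℝ) ≤ 2) e
            _ = t^e * (2:ℝ)^(-e) := by rw [Real.rpow_neg (by norm_num : (0:ℝ) ≤ 2)]; ring
            _ ≤ t^e * (4:ℝ)^|e| := by
                have habs : -e = |e| := (abs_of_neg hen).symm
                have h4 : (2:ℝ)^(-e) ≤ (4:ℝ)^|e| := by
                  rw [habs]
                  exact Real.rpow_le_rpow (by norm_num) (by norm_num) (abs_nonneg e)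
                exact mul_le_mul_of_nonneg_left h4 (Real.rpow_nonneg ht0.le _)
            _ = (4:ℝ)^|e| * t^e := mul_comm _ _
      have hD2 : ‖hσ.D α 0 x ξ‖ ≤ max C0 0 * ((4:ℝ)^|e| * t^e) :=
        (hC0' x ξ).trans (mul_le_mul_of_nonneg_left hjbe (le_max_right C0 0))
      rw [hnorm, mul_one]
      calc ‖∏ i, (Complex.I * (ξ i:ℂ))^(β i)‖ * ‖hσ.D α 0 x ξ‖ * |cutoff η j ξ|
          ≤ ‖∏ i, (Complex.I * (ξ i:ℂ))^(β i)‖ * ‖hσ.D α 0 x ξ‖ * 1 := by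
            apply mul_le_mul_of_nonneg_left (abs_cutoff_le_one hη j ξ) (by positivity)
        _ = ‖∏ i, (Complex.I * (ξ i:ℂ))^(β i)‖ * ‖hσ.D α 0 x ξ‖ := mul_one _
        _ ≤ M := by
            rw [hMdef]
            exact mul_le_mul h1 hD2 (norm_nonneg _) (by positivity)
  -- continuity
  have hcutc : Continuous (cutoff η j) := by
    rcases eq_or_ne j 0 with h|h
    · have : cutoff η 0 = η := by funext ξ; simp [cutoff]
      rw [h, this]; exact hη.smooth.continuous
    · have hco : cutoff η j = fun ξ => η (((2:ℝ)^(-(j:ℤ))) • ξ) - η (((2:ℝ)^(-(j:ℤ)+1)) • ξ) := by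
        funext ξ; simp [cutoff, h]
      rw [hco]
      exact (hη.smooth.continuous.comp (continuous_const_smul _)).sub
        (hη.smooth.continuous.comp (continuous_const_smul _))
  have hfc : Continuous f := by
    rw [hf]
    apply Continuous.mul
    apply Continuous.mul
    apply Continuous.mul
    · apply continuous_finset_prod
      intro i _
      apply Continuous.pow
      apply Continuous.mul continuous_const
      exact Complex.continuous_ofReal.comp (by fun_prop)
    · exact (hσ.continuous α 0 hα (by simp [msize])).comp
        (continuous_const.prodMk continuous_id)
    · exact Complex.continuous_ofReal.comp hcutc
    · apply Complex.continuous_exp.comp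
      apply Continuous.mul continuous_const
      exact Complex.continuous_ofReal.comp (continuous_id.inner continuous_const)
  -- integral bound
  have key : ‖∫ ξ : Ed d, f ξ‖ ≤ M * (volume (closedBall (0:Ed d) R)).toReal := by
    rw [← setIntegral_eq_integral_of_forall_compl_eq_zero hzero]
    exact norm_setIntegral_le_of_norm_le_const measure_closedBall_lt_top hM
  have hvol : (volume (closedBall (0:Ed d) R)).toReal = R^d * vol1 := by
    rw [Measure.addHaar_closedBall _ _ hR0]
    simp [hvol1, finrank_euclideanSpace_fin, ENNReal.toReal_mul,
      ENNReal.toReal_ofReal (by positivity : (0:ℝ) ≤ R^d)]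
  have hKj : Kj hσ.D η j α β x z = ((2 * Real.pi) ^ (-(d:ℤ)) : ℝ) • ∫ ξ : Ed d, f ξ := rfl
  have hsc : |((2 * Real.pi) ^ (-(d:ℤ)) : ℝ)| ≤ 1 := by
    rw [abs_of_pos (by positivity)]
    apply zpow_le_one_of_nonpos₀
    · nlinarith [Real.pi_gt_three]
    · omega
  have hfinal : M * (R^d * vol1) =
      (max C0 0 * (4:ℝ)^|e| * 2^(msize β + d) * vol1) *
        (2:ℝ) ^ ((j:ℝ) * ((d:ℝ) + m + δ * (msize α : ℝ) + (msize β : ℝ))) := by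
    have h1 : R ^ (msize β) * R^d = 2^(msize β + d) * t^(msize β + d) := by
      rw [hR, ← pow_add, mul_pow]
    have h2 : t^(msize β + d) * t^e =
        (2:ℝ) ^ ((j:ℝ) * ((d:ℝ) + m + δ * (msize α : ℝ) + (msize β : ℝ))) := by
      rw [← Real.rpow_natCast t (msize β + d), ← Real.rpow_add ht0]
      rw [ht, ← Real.rpow_natCast (2:ℝ) j, ← Real.rpow_mul (by norm_num : (0:ℝ) ≤ 2)]
      congr 1
      rw [he]
      push_cast
      ring
    calc M * (R^d * vol1)
        = (max C0 0 * (4:ℝ)^|e| * vol1) * ((R^(msize β) * R^d) * t^e) := by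
          rw [hMdef]; ring
      _ = (max C0 0 * (4:ℝ)^|e| * vol1) * ((2^(msize β + d) * t^(msize β + d)) * t^e) := by
          rw [h1]
      _ = (max C0 0 * (4:ℝ)^|e| * 2^(msize β + d) * vol1) * (t^(msize β + d) * t^e) := by
          ring
      _ = _ := by rw [h2]
  calc ‖Kj hσ.D η j α β x z‖
      = |((2 * Real.pi) ^ (-(d:ℤ)) : ℝ)| * ‖∫ ξ : Ed d, f ξ‖ := by
        rw [hKj, norm_smul, Real.norm_eq_abs]
    _ ≤ 1 * (M * (R^d * vol1)) := by
        apply mul_le_mul hsc (key.trans (le_of_eq (by rw [hvol]))) (norm_nonneg _)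
          (by norm_num)
    _ = M * (R^d * vol1) := one_mul _
    _ = _ := hfinal
/-- with `a = d+m+δ|α|+|β|`, for `L ≥ 0` with `a + L > 0`:
`Σ_{2^j ≤ |z|⁻¹} |K_{j,α,β}(x,z)| ≤ C_{α,β,L} |z|^{-a-L}` for `0 < |z| ≤ 1`. -/
theorem statement3 {d : ℕ} (hd : 1 ≤ d) {m ρ δ : ℝ} {N N' : ℕ} {σ : Ed d → Ed d → ℂ}
    (hρ0 : 0 < ρ) (hρ1 : ρ ≤ 1) (hδ0 : 0 ≤ δ) (hδ1 : δ < 1)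
    (hσ : SymbolClass d m ρ δ N N' σ)
    {η : Ed d → ℝ} (hη : IsDyadicCutoff d η)
    (α β : Fin d → ℕ) (hα : msize α ≤ N)
    (a : ℝ) (ha : a = (d : ℝ) + m + δ * (msize α : ℝ) + (msize β : ℝ))
    (L : ℝ) (hL0 : 0 ≤ L) (haL : 0 < a + L) :
    ∃ C : ℝ, ∀ (x z : Ed d), z ≠ 0 → ‖z‖ ≤ 1 →
      (∑' j : ℕ, if (2 : ℝ) ^ j ≤ ‖z‖⁻¹ then ‖Kj hσ.D η j α β x z‖ else 0) ≤
        C * ‖z‖ ^ (-(a + L)) := by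
  obtain ⟨C, hCnn, hC⟩ := PaperPDO.Kj_norm_bound hσ hη α β hα
  set r : ℝ := (2:ℝ) ^ (a + L) with hr
  have hr1 : (1:ℝ) < r := by
    rw [hr, show (1:ℝ) = (2:ℝ)^(0:ℝ) by simp]
    exact (Real.rpow_lt_rpow_left_iff (by norm_num : (1:ℝ) < 2)).mpr haL
  have hfrac : 0 ≤ r / (r - 1) := div_nonneg (by linarith) (by linarith)
  refine ⟨C * (r / (r - 1)), ?_⟩
  intro x z hz hz1
  have hzpos : 0 < ‖z‖ := norm_pos_iff.mpr hz
  set T : ℝ := ‖z‖⁻¹ with hT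
  have hTpos : 0 < T := by positivity
  have hT1 : 1 ≤ T := (one_le_inv₀ hzpos).mpr hz1
  set J : ℕ := ⌊Real.logb 2 T⌋₊ with hJ
  have hlogbnn : 0 ≤ Real.logb 2 T := Real.logb_nonneg (by norm_num) hT1
  have hgsupp : ∀ j ∉ Finset.range (J+1),
      (if (2:ℝ)^j ≤ T then ‖Kj hσ.D η j α β x z‖ else 0) = 0 := by
    intro j hj
    rw [Finset.mem_range, not_lt] at hj
    rw [if_neg]
    intro hle
    have h1 : (j:ℝ) ≤ Real.logb 2 T :=
      (Real.le_logb_iff_rpow_le (by norm_num : (1:ℝ) < 2) hTpos).mpr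
        (by rwa [Real.rpow_natCast])
    have h2 : j ≤ J := Nat.le_floor h1
    omega
  rw [tsum_eq_sum hgsupp]
  have hterm : ∀ j ∈ Finset.range (J+1),
      (if (2:ℝ)^j ≤ T then ‖Kj hσ.D η j α β x z‖ else 0) ≤ C * r^j := by
    intro j _
    split_ifs with hle
    · refine (hC j x z).trans ?_
      apply mul_le_mul_of_nonneg_left _ hCnn
      have h1 : (2:ℝ)^((j:ℝ) * ((d:ℝ) + m + δ * (msize α : ℝ) + (msize β : ℝ))) ≤
          (2:ℝ)^((j:ℝ)*(a+L)) := by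
        apply (Real.rpow_le_rpow_left_iff (by norm_num : (1:ℝ) < 2)).mpr
        rw [← ha]
        have : (0:ℝ) ≤ (j:ℝ) := Nat.cast_nonneg j
        nlinarith
      refine h1.trans (le_of_eq ?_)
      rw [hr, ← Real.rpow_natCast ((2:ℝ)^(a+L)) j, ← Real.rpow_mul (by norm_num : (0:ℝ) ≤ 2)]
      ring_nf
    · positivity
  calc ∑ j ∈ Finset.range (J+1), (if (2:ℝ)^j ≤ T then ‖Kj hσ.D η j α β x z‖ else 0)
      ≤ ∑ j ∈ Finset.range (J+1), C * r^j := Finset.sum_le_sum hterm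
    _ = C * ∑ j ∈ Finset.range (J+1), r^j := by rw [Finset.mul_sum]
    _ = C * ((r^(J+1) - 1)/(r-1)) := by rw [geom_sum_eq hr1.ne' (J+1)]
    _ ≤ C * (r^(J+1)/(r-1)) := by
        apply mul_le_mul_of_nonneg_left _ hCnn
        gcongr
        · linarith
    _ = (C * (r/(r-1))) * r^J := by
        rw [pow_succ]
        field_simp
    _ ≤ (C * (r/(r-1))) * ‖z‖^(-(a+L)) := by
        apply mul_le_mul_of_nonneg_left _ (mul_nonneg hCnn hfrac)
        have h2J : (2:ℝ)^((J:ℝ)) ≤ T := by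
          calc (2:ℝ)^((J:ℝ)) ≤ (2:ℝ)^(Real.logb 2 T) :=
                (Real.rpow_le_rpow_left_iff (by norm_num : (1:ℝ) < 2)).mpr
                  (Nat.floor_le hlogbnn)
            _ = T := Real.rpow_logb (by norm_num) (by norm_num) hTpos
        have heq : r^J = ((2:ℝ)^((J:ℝ)))^(a+L) := by
          rw [hr, ← Real.rpow_natCast ((2:ℝ)^(a+L)) J,
            ← Real.rpow_mul (by norm_num : (0:ℝ) ≤ 2), mul_comm,
            Real.rpow_mul (by norm_num : (0:ℝ) ≤ 2)]
        rw [heq]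
        have h3 : ((2:ℝ)^((J:ℝ)))^(a+L) ≤ T^(a+L) :=
          Real.rpow_le_rpow (by positivity) h2J haL.le
        refine h3.trans (le_of_eq ?_)
        rw [hT, Real.inv_rpow (norm_nonneg z), ← Real.rpow_neg (norm_nonneg z)]
end
end

section
/- Let d ≥ 1, l ∈ {0,…,d−1} and N > d. Write points of ℝ^d as (ȳ, w) with ȳ ∈ ℝ^l and w ∈ ℝ^{d−l}, and let |·| denote the Euclidean norm on ℝ^d and |·|_∞ the max norm. Then there is a constant C = C(d, l, N) such that for every t > 0, every y' ∈ ℝ^{d−l} with |y'|_∞ ≤ t, and every ϑ ∈ (0,1): t · ∫_{{x' ∈ ℝ^{d−l} : |x'|_∞ > Nt}} ∫_{ℝ^l} |(ȳ, x' − ϑ y')|^{−(d+1)} dȳ dx' ≤ C. -/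
open MeasureTheory Real Complex Filter Set

noncomputable section

open PaperPDO

namespace Stmt9Aux

open scoped ENNReal

lemma coord_le_norm {n : ℕ} (x : Ed n) (i : Fin n) : |x i| ≤ ‖x‖ := by
  rw [EuclideanSpace.norm_eq]
  have h1 : |x i| = √(‖x i‖ ^ 2) := by
    rw [Real.norm_eq_abs, Real.sqrt_sq (abs_nonneg _)]
  rw [h1]
  exact Real.sqrt_le_sqrt (Finset.single_le_sum (f := fun j => ‖x j‖ ^ 2)
    (fun j _ => sq_nonneg _) (Finset.mem_univ i))

lemma maxNorm_le_norm {n : ℕ} (x : Ed n) : maxNorm x ≤ ‖x‖ := by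
  rw [maxNorm]
  refine (pi_norm_le_iff_of_nonneg (norm_nonneg x)).2 fun i => ?_
  rw [Real.norm_eq_abs]
  exact coord_le_norm x i

lemma norm_le_of_maxNorm_le {n : ℕ} (x : Ed n) {t : ℝ} (ht : 0 ≤ t)
    (h : maxNorm x ≤ t) : ‖x‖ ≤ (n : ℝ) * t := by
  have hcoord : ∀ i, |x i| ≤ t := fun i => by
    calc |x i| = ‖(fun j => x j : Fin n → ℝ) i‖ := by rw [Real.norm_eq_abs]
    _ ≤ maxNorm x := norm_le_pi_norm _ i
    _ ≤ t := h
  rw [EuclideanSpace.norm_eq]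
  have hsum : ∑ i, ‖x i‖ ^ 2 ≤ (n : ℝ) * t ^ 2 := by
    calc ∑ i, ‖x i‖ ^ 2 ≤ ∑ _i : Fin n, t ^ 2 := by
          refine Finset.sum_le_sum fun i _ => ?_
          rw [Real.norm_eq_abs]
          exact pow_le_pow_left₀ (abs_nonneg _) (hcoord i) 2
    _ = (n : ℝ) * t ^ 2 := by simp [mul_comm]
  calc √(∑ i, ‖x i‖ ^ 2) ≤ √(((n : ℝ) * t) ^ 2) := by
        refine Real.sqrt_le_sqrt ?_
        have h1 : (n : ℝ) ≤ (n : ℝ) ^ 2 := by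
          rcases Nat.eq_zero_or_pos n with h | h
          · simp [h]
          · nlinarith [(by exact_mod_cast h : (1:ℝ) ≤ n)]
        nlinarith [sq_nonneg t]
  _ = (n : ℝ) * t := Real.sqrt_sq (by positivity)

/-- the radial profile on the product space -/
def rho (m k : ℕ) (p : Ed m × Ed k) : ℝ := √(‖p.2‖ ^ 2 + ‖p.1‖ ^ 2)

lemma rho_nonneg (m k : ℕ) (p : Ed m × Ed k) : 0 ≤ rho m k p := Real.sqrt_nonneg _

lemma rho_cont (m k : ℕ) : Continuous (rho m k) := by
  unfold rho; fun_prop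

instance haar_prod (m k : ℕ) :
    Measure.IsAddHaarMeasure (volume : Measure (Ed m × Ed k)) :=
  (Measure.volume_eq_prod (Ed m) (Ed k)) ▸ Measure.prod.instIsAddHaarMeasure volume volume

lemma finrank_prod_ed (m k : ℕ) : Module.finrank ℝ (Ed m × Ed k) = m + k := by
  rw [Module.finrank_prod, finrank_euclideanSpace_fin, finrank_euclideanSpace_fin]

/-- the model tail integral -/
def Phi (m k : ℕ) (e : ℝ) (R : ℝ) : ℝ≥0∞ :=
  ∫⁻ p : Ed m × Ed k,
    {q | R < rho m k q}.indicator (fun q => ENNReal.ofReal (rho m k q ^ e)) p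

lemma indicator_meas (m k : ℕ) (e R : ℝ) :
    Measurable ({q | R < rho m k q}.indicator
      (fun q => ENNReal.ofReal (rho m k q ^ e))) := by
  refine Measurable.indicator ?_ (measurableSet_lt measurable_const (rho_cont m k).measurable)
  have h : Continuous (rho m k) := rho_cont m k
  fun_prop

lemma Phi_scale (m k : ℕ) (e : ℝ) {R : ℝ} (hR : 0 < R) :
    Phi m k e R = ENNReal.ofReal (R ^ ((m + k : ℕ) : ℝ) * R ^ e) * Phi m k e 1 := by
  have hmap := Measure.map_addHaar_smul (volume : Measure (Ed m × Ed k)) hR.ne'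
  have h1 : ∫⁻ z, ({q | R < rho m k q}.indicator
        (fun q => ENNReal.ofReal (rho m k q ^ e))) z
        ∂(Measure.map (fun x => R • x) (volume : Measure (Ed m × Ed k)))
      = ∫⁻ w, ({q | R < rho m k q}.indicator
        (fun q => ENNReal.ofReal (rho m k q ^ e))) (R • w) :=
    lintegral_map (indicator_meas m k e R) (measurable_const_smul R)
  rw [hmap, lintegral_smul_measure] at h1
  have hpt : ∀ w : Ed m × Ed k, ({q | R < rho m k q}.indicator
        (fun q => ENNReal.ofReal (rho m k q ^ e))) (R • w)
      = ENNReal.ofReal (R ^ e) * ({q | 1 < rho m k q}.indicator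
        (fun q => ENNReal.ofReal (rho m k q ^ e))) w := by
    intro w
    have hsm : rho m k (R • w) = R * rho m k w := by
      unfold rho
      rw [Prod.smul_fst, Prod.smul_snd, norm_smul, norm_smul, Real.norm_eq_abs,
        abs_of_pos hR, mul_pow, mul_pow, ← mul_add, Real.sqrt_mul (by positivity),
        Real.sqrt_sq hR.le]
    simp only [Set.indicator_apply, Set.mem_setOf_eq, hsm]
    by_cases h : 1 < rho m k w
    · rw [if_pos (by nlinarith), if_pos h, ← ENNReal.ofReal_mul (rpow_nonneg hR.le e),
        ← Real.mul_rpow hR.le (rho_nonneg m k w)]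
    · have hle : rho m k w ≤ 1 := not_lt.1 h
      rw [if_neg (by nlinarith), if_neg h, mul_zero]
  simp only [hpt] at h1
  rw [lintegral_const_mul' _ _ ENNReal.ofReal_ne_top] at h1
  rw [finrank_prod_ed] at h1
  rw [abs_of_pos (by positivity)] at h1
  have hcancel : ENNReal.ofReal (R ^ (m + k : ℕ)) * ENNReal.ofReal ((R ^ (m + k : ℕ))⁻¹) = 1 := by
    rw [← ENNReal.ofReal_mul (by positivity), mul_inv_cancel₀ (by positivity),
      ENNReal.ofReal_one]
  have h1' : ENNReal.ofReal ((R ^ (m + k : ℕ))⁻¹) * Phi m k e R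
      = ENNReal.ofReal (R ^ e) * Phi m k e 1 := by unfold Phi; exact h1
  calc Phi m k e R = 1 * Phi m k e R := (one_mul _).symm
  _ = ENNReal.ofReal (R ^ (m + k : ℕ)) *
      (ENNReal.ofReal ((R ^ (m + k : ℕ))⁻¹) * Phi m k e R) := by
      rw [← mul_assoc, hcancel]
  _ = ENNReal.ofReal (R ^ (m + k : ℕ)) * (ENNReal.ofReal (R ^ e) * Phi m k e 1) := by
      rw [h1']
  _ = ENNReal.ofReal (R ^ ((m + k : ℕ) : ℝ) * R ^ e) * Phi m k e 1 := by
      rw [← mul_assoc, ← ENNReal.ofReal_mul (by positivity), Real.rpow_natCast]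

lemma Phi_lt_top (m k : ℕ) {e : ℝ} (he : ((m + k : ℕ) : ℝ) < -e) :
    Phi m k e 1 < ∞ := by
  have he0 : e ≤ 0 := by nlinarith [Nat.cast_nonneg (α := ℝ) (m + k)]
  have hpt : ∀ p : Ed m × Ed k, {q | 1 < rho m k q}.indicator
      (fun q => ENNReal.ofReal (rho m k q ^ e)) p
      ≤ ENNReal.ofReal ((2 : ℝ) ^ (-e)) * ENNReal.ofReal ((1 + ‖p‖) ^ e) := by
    intro p
    rw [Set.indicator_apply]
    split_ifs with h
    · have hρ : (1:ℝ) < rho m k p := h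
      have hnorm : ‖p‖ ≤ rho m k p := by
        rw [Prod.norm_def]
        have e1 : ‖p.1‖ = √(‖p.1‖ ^ 2) := (Real.sqrt_sq (norm_nonneg _)).symm
        have e2 : ‖p.2‖ = √(‖p.2‖ ^ 2) := (Real.sqrt_sq (norm_nonneg _)).symm
        refine max_le ?_ ?_
        · rw [e1]; exact Real.sqrt_le_sqrt (by nlinarith [sq_nonneg ‖p.2‖])
        · rw [e2]; exact Real.sqrt_le_sqrt (by nlinarith [sq_nonneg ‖p.1‖])
      have h2 : 1 + ‖p‖ ≤ 2 * rho m k p := by linarith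
      have h3 : (2 * rho m k p) ^ e ≤ (1 + ‖p‖) ^ e :=
        Real.rpow_le_rpow_of_nonpos (by positivity) h2 he0
      have h4 : (2 * rho m k p) ^ e = 2 ^ e * rho m k p ^ e :=
        Real.mul_rpow (by norm_num) (rho_nonneg m k p)
      rw [← ENNReal.ofReal_mul (by positivity)]
      refine ENNReal.ofReal_le_ofReal ?_
      calc rho m k p ^ e = (2:ℝ) ^ (-e) * (2 ^ e * rho m k p ^ e) := by
            rw [← mul_assoc, ← Real.rpow_add (by norm_num), neg_add_cancel,
              Real.rpow_zero, one_mul]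
      _ ≤ (2:ℝ) ^ (-e) * (1 + ‖p‖) ^ e := by
            rw [← h4]
            exact mul_le_mul_of_nonneg_left h3 (by positivity)
    · exact zero_le
  calc Phi m k e 1
      ≤ ∫⁻ p : Ed m × Ed k,
          ENNReal.ofReal ((2 : ℝ) ^ (-e)) * ENNReal.ofReal ((1 + ‖p‖) ^ e) :=
        lintegral_mono hpt
  _ = ENNReal.ofReal ((2 : ℝ) ^ (-e)) *
        ∫⁻ p : Ed m × Ed k, ENNReal.ofReal ((1 + ‖p‖) ^ e) :=
      lintegral_const_mul' _ _ ENNReal.ofReal_ne_top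
  _ < ∞ := by
      refine ENNReal.mul_lt_top ENNReal.ofReal_lt_top ?_
      have h5 := finite_integral_one_add_norm (E := Ed m × Ed k) (μ := volume)
        (r := -e) (by rwa [finrank_prod_ed])
      simpa using h5

lemma key_pointwise {d l : ℕ} (hd : 1 ≤ d) (hl : l < d) {N t ϑ c : ℝ}
    (hN : (d : ℝ) < N) (ht : 0 < t) (hc : c = 1 - (d : ℝ) / N)
    (y' : Ed (d - l)) (hy' : maxNorm y' ≤ t) (hϑ : ϑ ∈ Set.Ioo (0 : ℝ) 1)
    (x' : Ed (d - l)) (hx' : N * t < ‖x'‖) (yb : Ed l) :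
    √(‖yb‖ ^ 2 + ‖x' - ϑ • y'‖ ^ 2) ^ (-((d : ℝ) + 1))
      ≤ c ^ (-((d : ℝ) + 1)) * √(‖yb‖ ^ 2 + ‖x'‖ ^ 2) ^ (-((d : ℝ) + 1)) := by
  have hd1 : (1 : ℝ) ≤ (d : ℝ) := by exact_mod_cast hd
  have hN0 : (0 : ℝ) < N := by linarith
  have hc0 : 0 < c := by
    rw [hc]
    have h1 : (d : ℝ) / N < 1 := (div_lt_one hN0).2 hN
    linarith
  have hc1 : c ≤ 1 := by
    rw [hc]
    have h1 : 0 ≤ (d : ℝ) / N := by positivity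
    linarith
  have hyn : ‖y'‖ ≤ (d : ℝ) * t := by
    have h1 := norm_le_of_maxNorm_le y' ht.le hy'
    have h2 : ((d - l : ℕ) : ℝ) ≤ (d : ℝ) := Nat.cast_le.2 (Nat.sub_le d l)
    nlinarith
  have hϑy : ‖ϑ • y'‖ ≤ (d : ℝ) * t := by
    rw [norm_smul, Real.norm_eq_abs, abs_of_pos hϑ.1]
    nlinarith [hϑ.2, norm_nonneg y', hϑ.1]
  have hx'pos : 0 < ‖x'‖ := lt_trans (by positivity) hx'
  have hdt : (d : ℝ) * t ≤ (d / N) * ‖x'‖ := by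
    rw [div_mul_eq_mul_div, le_div_iff₀ hN0]
    nlinarith
  have hsub : c * ‖x'‖ ≤ ‖x' - ϑ • y'‖ := by
    have h1 : ‖x'‖ - ‖ϑ • y'‖ ≤ ‖x' - ϑ • y'‖ := norm_sub_norm_le _ _
    have h2 : c * ‖x'‖ = ‖x'‖ - (d / N) * ‖x'‖ := by rw [hc]; ring
    linarith [hϑy.trans hdt]
  have hA : c ^ 2 * (‖yb‖ ^ 2 + ‖x'‖ ^ 2) ≤ ‖yb‖ ^ 2 + ‖x' - ϑ • y'‖ ^ 2 := by
    have h1 : (c * ‖x'‖) ^ 2 ≤ ‖x' - ϑ • y'‖ ^ 2 := by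
      have := mul_self_le_mul_self (by positivity) hsub
      nlinarith
    have hcsq : c ^ 2 ≤ 1 := by nlinarith
    nlinarith [sq_nonneg ‖yb‖, mul_le_of_le_one_left (sq_nonneg ‖yb‖) hcsq]
  have hB0 : 0 < ‖yb‖ ^ 2 + ‖x'‖ ^ 2 := by nlinarith [sq_nonneg ‖yb‖]
  have hBpos : 0 < √(‖yb‖ ^ 2 + ‖x'‖ ^ 2) := Real.sqrt_pos.2 hB0
  have hstep : c * √(‖yb‖ ^ 2 + ‖x'‖ ^ 2) ≤ √(‖yb‖ ^ 2 + ‖x' - ϑ • y'‖ ^ 2) := by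
    have h1 := Real.sqrt_le_sqrt hA
    rwa [Real.sqrt_mul (sq_nonneg c), Real.sqrt_sq hc0.le] at h1
  have he0 : -((d : ℝ) + 1) ≤ 0 := by linarith
  calc √(‖yb‖ ^ 2 + ‖x' - ϑ • y'‖ ^ 2) ^ (-((d : ℝ) + 1))
      ≤ (c * √(‖yb‖ ^ 2 + ‖x'‖ ^ 2)) ^ (-((d : ℝ) + 1)) :=
        Real.rpow_le_rpow_of_nonpos (mul_pos hc0 hBpos) hstep he0
  _ = c ^ (-((d : ℝ) + 1)) * √(‖yb‖ ^ 2 + ‖x'‖ ^ 2) ^ (-((d : ℝ) + 1)) :=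
        Real.mul_rpow hc0.le (Real.sqrt_nonneg _)

end Stmt9Aux

open scoped ENNReal

/-- the quantity `II` is bounded uniformly: for `l < d`, `N > d` there is
`C` such that for all `t > 0`, `|y'|_∞ ≤ t` and `ϑ ∈ (0,1)`,
`t ∫_{|x'|_∞ > Nt} ∫_{ℝ^l} |(ybar, x' - ϑ y')|^{-(d+1)} dybar dx' ≤ C`. -/
theorem statement9 (d l : ℕ) (hd : 1 ≤ d) (hl : l < d) (N : ℝ) (hN : (d : ℝ) < N) :
    ∃ C : ℝ, ∀ t : ℝ, 0 < t → ∀ y' : Ed (d - l), maxNorm y' ≤ t →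
      ∀ ϑ : ℝ, ϑ ∈ Set.Ioo (0 : ℝ) 1 →
        ENNReal.ofReal t *
          ∫⁻ x' in {x' : Ed (d - l) | N * t < maxNorm x'},
            ∫⁻ ybar : Ed l, ENNReal.ofReal
              ((Real.sqrt (‖ybar‖ ^ 2 + ‖x' - ϑ • y'‖ ^ 2)) ^ (-((d : ℝ) + 1))) ≤
        ENNReal.ofReal C := by
  have hd1 : (1 : ℝ) ≤ (d : ℝ) := by exact_mod_cast hd
  have hN0 : (0 : ℝ) < N := by linarith
  set e : ℝ := -((d : ℝ) + 1) with he
  set c : ℝ := 1 - (d : ℝ) / N with hc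
  have hc0 : 0 < c := by
    rw [hc]
    have h1 : (d : ℝ) / N < 1 := (div_lt_one hN0).2 hN
    linarith
  have hml : (d - l) + l = d := Nat.sub_add_cancel hl.le
  have hfin : Stmt9Aux.Phi (d - l) l e 1 < ∞ := by
    refine Stmt9Aux.Phi_lt_top _ _ ?_
    rw [hml, he]
    push_cast
    linarith
  refine ⟨(ENNReal.ofReal (c ^ e / N) * Stmt9Aux.Phi (d - l) l e 1).toReal, ?_⟩
  intro t ht y' hy' ϑ hϑ
  rw [ENNReal.ofReal_toReal (ENNReal.mul_ne_top ENNReal.ofReal_ne_top hfin.ne)]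
  have hR : 0 < N * t := by positivity
  have hS'm : MeasurableSet {x' : Ed (d - l) | N * t < ‖x'‖} :=
    measurableSet_lt measurable_const continuous_norm.measurable
  have hmaxc : Continuous fun x : Ed (d - l) => maxNorm x := by
    unfold maxNorm
    exact (continuous_pi fun i => (EuclideanSpace.proj (𝕜 := ℝ) i).continuous).norm
  have hSm : MeasurableSet {x' : Ed (d - l) | N * t < maxNorm x'} :=
    measurableSet_lt measurable_const hmaxc.measurable
  have hsubset : {x' : Ed (d - l) | N * t < maxNorm x'} ⊆ {x' : Ed (d - l) | N * t < ‖x'‖} :=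
    fun x' hx' => lt_of_lt_of_le hx' (Stmt9Aux.maxNorm_le_norm x')
  have step1 : ∫⁻ x' in {x' : Ed (d - l) | N * t < maxNorm x'},
        ∫⁻ yb : Ed l, ENNReal.ofReal (√(‖yb‖ ^ 2 + ‖x' - ϑ • y'‖ ^ 2) ^ e)
      ≤ ENNReal.ofReal (c ^ e) * ∫⁻ x' in {x' : Ed (d - l) | N * t < ‖x'‖},
        ∫⁻ yb : Ed l, ENNReal.ofReal (√(‖yb‖ ^ 2 + ‖x'‖ ^ 2) ^ e) := by
    rw [← lintegral_const_mul' _ _ ENNReal.ofReal_ne_top]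
    refine le_trans (lintegral_mono_set hsubset) ?_
    refine setLIntegral_mono' hS'm fun x' hx' => ?_
    rw [← lintegral_const_mul' _ _ ENNReal.ofReal_ne_top]
    refine lintegral_mono fun yb => ?_
    rw [← ENNReal.ofReal_mul (by positivity)]
    refine ENNReal.ofReal_le_ofReal ?_
    exact Stmt9Aux.key_pointwise hd hl hN ht hc y' hy' hϑ x' hx' yb
  have step2 : ∫⁻ x' in {x' : Ed (d - l) | N * t < ‖x'‖},
        ∫⁻ yb : Ed l, ENNReal.ofReal (√(‖yb‖ ^ 2 + ‖x'‖ ^ 2) ^ e)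
      ≤ Stmt9Aux.Phi (d - l) l e (N * t) := by
    set F : Ed (d - l) → Ed l → ℝ≥0∞ := fun x' yb =>
      if N * t < ‖x'‖ then ENNReal.ofReal (√(‖yb‖ ^ 2 + ‖x'‖ ^ 2) ^ e) else 0 with hF
    have h1 : ∫⁻ x' in {x' : Ed (d - l) | N * t < ‖x'‖},
          ∫⁻ yb : Ed l, ENNReal.ofReal (√(‖yb‖ ^ 2 + ‖x'‖ ^ 2) ^ e)
        = ∫⁻ x' : Ed (d - l), ∫⁻ yb : Ed l, F x' yb := by
      rw [← lintegral_indicator hS'm]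
      refine lintegral_congr fun x' => ?_
      rw [Set.indicator_apply]
      simp only [Set.mem_setOf_eq, hF]
      by_cases h : N * t < ‖x'‖
      · rw [if_pos h]
        exact lintegral_congr fun yb => (if_pos h).symm
      · rw [if_neg h]
        simp [h]
    have hFm : Measurable (Function.uncurry F) := by
      have hset : MeasurableSet {p : Ed (d - l) × Ed l | N * t < ‖p.1‖} :=
        measurableSet_lt measurable_const (continuous_norm.comp continuous_fst).measurable
      have hg : Measurable fun p : Ed (d - l) × Ed l =>
          ENNReal.ofReal (√(‖p.2‖ ^ 2 + ‖p.1‖ ^ 2) ^ e) := by fun_prop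
      exact Measurable.ite hset hg measurable_const
    have h2 := lintegral_lintegral (μ := (volume : Measure (Ed (d - l))))
      (ν := (volume : Measure (Ed l))) hFm.aemeasurable
    rw [h1, h2, ← Measure.volume_eq_prod]
    rw [Stmt9Aux.Phi]
    refine lintegral_mono fun p => ?_
    rw [Set.indicator_apply]
    simp only [Set.mem_setOf_eq, hF]
    by_cases h : N * t < ‖p.1‖
    · have hle : ‖p.1‖ ≤ Stmt9Aux.rho (d - l) l p := by
        rw [Stmt9Aux.rho, show ‖p.1‖ = √(‖p.1‖ ^ 2) from (Real.sqrt_sq (norm_nonneg _)).symm]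
        exact Real.sqrt_le_sqrt (by nlinarith [sq_nonneg ‖p.2‖, Real.sq_sqrt (sq_nonneg ‖p.1‖)])
      rw [if_pos h, if_pos (lt_of_lt_of_le h hle)]
      exact le_of_eq rfl
    · rw [if_neg h]
      exact zero_le
  have hscale := Stmt9Aux.Phi_scale (d - l) l e hR
  calc ENNReal.ofReal t *
        ∫⁻ x' in {x' : Ed (d - l) | N * t < maxNorm x'},
          ∫⁻ ybar : Ed l, ENNReal.ofReal ((√(‖ybar‖ ^ 2 + ‖x' - ϑ • y'‖ ^ 2)) ^ e)
      ≤ ENNReal.ofReal t *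
          (ENNReal.ofReal (c ^ e) * Stmt9Aux.Phi (d - l) l e (N * t)) :=
        mul_le_mul_right (step1.trans (mul_le_mul_right step2 _)) _
  _ = ENNReal.ofReal (c ^ e / N) * Stmt9Aux.Phi (d - l) l e 1 := by
      rw [hscale, hml]
      rw [← mul_assoc, ← mul_assoc, ← ENNReal.ofReal_mul ht.le,
        ← ENNReal.ofReal_mul (mul_nonneg ht.le (Real.rpow_nonneg hc0.le e))]
      congr 2
      have hX : (N * t) ^ ((d : ℕ) : ℝ) * (N * t) ^ e = (N * t)⁻¹ := by
        rw [← Real.rpow_add hR, show ((d : ℕ) : ℝ) + e = -1 by rw [he]; push_cast; ring,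
          Real.rpow_neg_one]
      rw [hX]
      field_simp
end
end
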